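/- Let x be a skew-adjoint endomorphism of (V, B). For λ ∈ k let V_{(λ)} := ⋃_{m ≥ 1} ker (x − λ·1_V)^m denote the generalized eigenspace of x for λ. Then: (i) B(u, v) = 0 whenever u ∈ V_{(λ)}, v ∈ V_{(μ)} and μ ≠ −λ; (ii) for every λ, B restricts to a perfect pairing V_{(λ)} × V_{(−λ)} → k (for each nonzero u ∈ V_{(λ)} there is v ∈ V_{(−λ)} with B(u, v) ≠ 0, and symmetrically); in particular dim V_{(λ)} = dim V_{(−λ)}, and the restriction of B to V_{(0)} is nondegenerate. -/

import Mathlib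

/-- The generalized eigenspace `V_{(λ)} = ⋃_m ker (x - λ)^m`. -/
noncomputable def genEig {k V : Type*} [Field k] [AddCommGroup V] [Module k V]
    (x : Module.End k V) (lam : k) : Submodule k V :=
  ⨆ m : ℕ, LinearMap.ker ((x - lam • 1) ^ m)

/-!
Skew-adjointness gives `B ((x - λ) u) v = -B (u, (x + λ) v)`, so an induction on the nilpotency
orders shows `V_{(λ)} ⊥ V_{(μ)}` unless `λ + μ = 0`. Since `k` is algebraically closed, `V` is the
sum of the generalized eigenspaces; a vector of `V_{(λ)}` orthogonal to `V_{(-λ)}` is then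
orthogonal to all of `V`, hence zero. The same argument for the flipped form gives the other side of
the pairing, and a perfect pairing of finite-dimensional spaces forces equal dimensions.
-/

open Module End

lemma LinearMap.Nondegenerate.finrank_eq {K M N : Type*} [Field K] [AddCommGroup M] [Module K M]
    [AddCommGroup N] [Module K N] [FiniteDimensional K M] {p : M →ₗ[K] N →ₗ[K] K}
    (hp : p.Nondegenerate) : finrank K M = finrank K N :=
  have : p.IsPerfPair := .of_injective
    (ker_eq_bot.mp (separatingLeft_iff_ker_eq_bot.mp hp.1))
    (ker_eq_bot.mp (separatingRight_iff_flip_ker_eq_bot.mp hp.2))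
  finrank_of_isPerfPair p

lemma genEig_eq_maxGenEigenspace {k V : Type*} [Field k] [AddCommGroup V] [Module k V]
    (x : End k V) : genEig x = x.maxGenEigenspace := by
  ext1 lam
  rw [genEig, ← iSup_genEigenspace_eq]
  simp only [genEigenspace_nat]

namespace LinearMap.BilinForm

variable {k V : Type*} [Field k] [AddCommGroup V] [Module k V]
  {B : LinearMap.BilinForm k V} {x : End k V}

lemma flip_apply_skew (hx : ∀ u v, B (x u) v = -B u (x v)) (u v : V) :
    B.flip (x u) v = -B.flip u (x v) := by
  simp only [flip_apply, hx v u, neg_neg]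

lemma apply_eq_zero_of_pow_sub_smul_apply_eq_zero (hx : ∀ u v, B (x u) v = -B u (x v))
    {lam mu : k} (h : lam + mu ≠ 0) :
    ∀ (m n : ℕ) {u v : V}, ((x - lam • 1) ^ m) u = 0 → ((x - mu • 1) ^ n) v = 0 → B u v = 0
  | 0, _, u, v, hu, _ => by simp_all
  | _, 0, u, v, _, hv => by simp_all
  | m + 1, n + 1, u, v, hu, hv => by
    have h₁ : B ((x - lam • 1) u) v = 0 :=
      apply_eq_zero_of_pow_sub_smul_apply_eq_zero hx h m (n + 1)
        (by rwa [← mul_apply, ← pow_succ]) hv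
    have h₂ : B u ((x - mu • 1) v) = 0 :=
      apply_eq_zero_of_pow_sub_smul_apply_eq_zero hx h (m + 1) n hu
        (by rwa [← mul_apply, ← pow_succ])
    simp only [LinearMap.sub_apply, LinearMap.smul_apply, one_apply, map_sub, map_smul,
      smul_eq_mul, hx] at h₁ h₂
    exact (mul_eq_zero.mp (by linear_combination -h₁ - h₂ : (lam + mu) * B u v = 0)).resolve_left h

lemma apply_eq_zero_of_mem_maxGenEigenspace (hx : ∀ u v, B (x u) v = -B u (x v))
    {lam mu : k} (h : mu ≠ -lam) {u v : V} (hu : u ∈ x.maxGenEigenspace lam)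
    (hv : v ∈ x.maxGenEigenspace mu) : B u v = 0 := by
  obtain ⟨m, hm⟩ := (mem_maxGenEigenspace x lam u).mp hu
  obtain ⟨n, hn⟩ := (mem_maxGenEigenspace x mu v).mp hv
  exact apply_eq_zero_of_pow_sub_smul_apply_eq_zero hx
    (fun h' ↦ h (eq_neg_of_add_eq_zero_right h')) m n hm hn

lemma exists_mem_maxGenEigenspace_neg_apply_ne_zero [IsAlgClosed k] [FiniteDimensional k V]
    (hB : B.SeparatingLeft) (hx : ∀ u v, B (x u) v = -B u (x v)) {lam : k} {u : V}
    (hu : u ∈ x.maxGenEigenspace lam) (hu₀ : u ≠ 0) :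
    ∃ v ∈ x.maxGenEigenspace (-lam), B u v ≠ 0 := by
  by_contra! hperp
  refine hu₀ (hB u fun w ↦ ?_)
  have hle : ⨆ mu, x.maxGenEigenspace mu ≤ LinearMap.ker (B u) := by
    refine iSup_le fun mu w hw ↦ ?_
    obtain rfl | h := eq_or_ne mu (-lam)
    · exact hperp w hw
    · exact apply_eq_zero_of_mem_maxGenEigenspace hx h hu hw
  exact hle (by simp [iSup_maxGenEigenspace_eq_top])

lemma exists_mem_maxGenEigenspace_apply_ne_zero_of_mem_neg [IsAlgClosed k]
    [FiniteDimensional k V] (hB : B.SeparatingRight) (hx : ∀ u v, B (x u) v = -B u (x v))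
    {lam : k} {v : V} (hv : v ∈ x.maxGenEigenspace (-lam)) (hv₀ : v ≠ 0) :
    ∃ u ∈ x.maxGenEigenspace lam, B u v ≠ 0 := by
  obtain ⟨u, hu, hBu⟩ := exists_mem_maxGenEigenspace_neg_apply_ne_zero
    (flip_separatingLeft.mpr hB) (flip_apply_skew hx) hv hv₀
  exact ⟨u, by rwa [neg_neg] at hu, hBu⟩

lemma nondegenerate_domRestrict₁₂_maxGenEigenspace_neg [IsAlgClosed k] [FiniteDimensional k V]
    (hB : B.Nondegenerate) (hx : ∀ u v, B (x u) v = -B u (x v)) (lam : k) :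
    (B.domRestrict₁₂ (x.maxGenEigenspace lam) (x.maxGenEigenspace (-lam))).Nondegenerate := by
  constructor
  · rintro ⟨u, hu⟩ hperp
    by_contra hu₀
    obtain ⟨v, hv, hBv⟩ :=
      exists_mem_maxGenEigenspace_neg_apply_ne_zero hB.1 hx hu (by simpa using hu₀)
    exact hBv (hperp ⟨v, hv⟩)
  · rintro ⟨v, hv⟩ hperp
    by_contra hv₀
    obtain ⟨u, hu, hBu⟩ :=
      exists_mem_maxGenEigenspace_apply_ne_zero_of_mem_neg hB.2 hx hv (by simpa using hv₀)
    exact hBu (hperp ⟨u, hu⟩)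

end LinearMap.BilinForm

open LinearMap.BilinForm in
theorem statement14_general (k V : Type*) [Field k] [IsAlgClosed k]
    [AddCommGroup V] [Module k V] [FiniteDimensional k V]
    (B : LinearMap.BilinForm k V)
    (hnd : LinearMap.BilinForm.Nondegenerate B)
    (x : Module.End k V)
    (hskew : ∀ u v : V, B (x u) v = - B u (x v)) :
    (∀ lam mu : k, mu ≠ -lam →
      ∀ u ∈ genEig x lam, ∀ v ∈ genEig x mu, B u v = 0) ∧
    (∀ lam : k,
      (∀ u ∈ genEig x lam, u ≠ 0 → ∃ v ∈ genEig x (-lam), B u v ≠ 0) ∧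
      (∀ v ∈ genEig x (-lam), v ≠ 0 → ∃ u ∈ genEig x lam, B u v ≠ 0) ∧
      Module.finrank k ↥(genEig x lam) = Module.finrank k ↥(genEig x (-lam))) ∧
    LinearMap.BilinForm.Nondegenerate
      (B.domRestrict₁₂ (genEig x 0) (genEig x 0)) := by
  rw [genEig_eq_maxGenEigenspace]
  refine ⟨fun lam mu h u hu v hv ↦ apply_eq_zero_of_mem_maxGenEigenspace hskew h hu hv,
    fun lam ↦ ⟨fun u hu hu₀ ↦ exists_mem_maxGenEigenspace_neg_apply_ne_zero hnd.1 hskew hu hu₀,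
      fun v hv hv₀ ↦ exists_mem_maxGenEigenspace_apply_ne_zero_of_mem_neg hnd.2 hskew hv hv₀,
      ?_⟩, ?_⟩
  · exact (nondegenerate_domRestrict₁₂_maxGenEigenspace_neg hnd hskew lam).finrank_eq
  · have h₀ := nondegenerate_domRestrict₁₂_maxGenEigenspace_neg hnd hskew 0
    rwa [neg_zero] at h₀

/-- For a skew-adjoint endomorphism `x` of `(V, B)`, the generalized eigenspaces for `λ`
and `μ` are `B`-orthogonal unless `μ = -λ`; `B` restricts to a perfect pairing between
`V_{(λ)}` and `V_{(-λ)}` (so their dimensions agree), and the restriction of `B` to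
`V_{(0)}` is nondegenerate. -/
theorem statement14 (k V : Type*) [Field k] [IsAlgClosed k] [CharZero k]
    [AddCommGroup V] [Module k V] [FiniteDimensional k V]
    (B : LinearMap.BilinForm k V)
    (hsymm : ∀ u v : V, B u v = B v u)
    (hnd : LinearMap.BilinForm.Nondegenerate B)
    (x : Module.End k V)
    (hskew : ∀ u v : V, B (x u) v = - B u (x v)) :
    (∀ lam mu : k, mu ≠ -lam →
      ∀ u ∈ genEig x lam, ∀ v ∈ genEig x mu, B u v = 0) ∧
    (∀ lam : k,
      (∀ u ∈ genEig x lam, u ≠ 0 → ∃ v ∈ genEig x (-lam), B u v ≠ 0) ∧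
      (∀ v ∈ genEig x (-lam), v ≠ 0 → ∃ u ∈ genEig x lam, B u v ≠ 0) ∧
      Module.finrank k ↥(genEig x lam) = Module.finrank k ↥(genEig x (-lam))) ∧
    LinearMap.BilinForm.Nondegenerate
      (B.domRestrict₁₂ (genEig x 0) (genEig x 0)) :=
  statement14_general k V B hnd x hskew
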